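/- arXiv:1504.06439 — 5 statements merged into one kernel-verified Lean document; each statement's English description precedes it below -/
import Mathlib

section
/- Let f : ℝⁿ → ℝⁿ be measurable and locally bounded, and let F be its Filippov regularization, defined by F(r) = ⋂_{δ>0} ⋂_{N : m(N)=0} closure(convexHull(f(B_δ(r) \ N))), where m is Lebesgue measure and B_δ(r) the open ball of radius δ about r. Then at every point r₀ where f is continuous, F(r₀) = {f(r₀)}. -/
/-!
A null set has dense complement, so `r₀` is still adherent to `B_δ(r₀) \ N` and continuity puts
`f r₀` in the closure of `f '' (B_δ(r₀) \ N)`. Conversely, for `N = ∅` and `δ` small, continuity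
confines `f '' B_δ(r₀)` to the closed convex ball `closedBall (f r₀) ε`, which therefore contains
the closed convex hull.
-/

open MeasureTheory Metric Set

def filippovRegularization {X E : Type*} [PseudoMetricSpace X] [MeasurableSpace X]
    [NormedAddCommGroup E] [NormedSpace ℝ E] (μ : Measure X) (f : X → E) (x : X) : Set E :=
  ⋂ δ ∈ Ioi (0:ℝ), ⋂ N ∈ {N : Set X | μ N = 0}, closure (convexHull ℝ (f '' (ball x δ \ N)))

theorem mem_closure_diff_of_measure_zero {X : Type*} [TopologicalSpace X] [MeasurableSpace X]
    {μ : Measure X} [μ.IsOpenPosMeasure] {U N : Set X} {x : X} (hU : IsOpen U) (hx : x ∈ U)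
    (hN : μ N = 0) : x ∈ closure (U \ N) :=
  (interior_eq_empty_iff_dense_compl.mp (Measure.interior_eq_empty_of_null hN)
    ).open_subset_closure_inter hU hx

theorem filippovRegularization_eq_singleton_of_continuousAt {X E : Type*} [PseudoMetricSpace X]
    [MeasurableSpace X] [NormedAddCommGroup E] [NormedSpace ℝ E] (μ : Measure X)
    [μ.IsOpenPosMeasure] {f : X → E} {x : X} (hf : ContinuousAt f x) :
    filippovRegularization μ f x = {f x} := by
  refine eq_singleton_iff_unique_mem.mpr ⟨?_, fun y hy => ?_⟩
  · simp only [filippovRegularization, mem_iInter, mem_Ioi, mem_ofPred_eq]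
    intro δ hδ N hN
    exact closure_mono (subset_convexHull ℝ _)
      (mem_closure_image hf (mem_closure_diff_of_measure_zero isOpen_ball (mem_ball_self hδ) hN))
  · refine eq_of_forall_dist_le fun ε hε => ?_
    obtain ⟨δ, hδ, hball⟩ := Metric.continuousAt_iff.mp hf ε hε
    have hy_mem : y ∈ closure (convexHull ℝ (f '' (ball x δ \ ∅))) := by
      simp only [filippovRegularization, mem_iInter, mem_Ioi, mem_ofPred_eq] at hy
      exact hy δ hδ ∅ measure_empty
    have himage : f '' (ball x δ \ ∅) ⊆ closedBall (f x) ε := by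
      rintro _ ⟨z, ⟨hz, -⟩, rfl⟩
      exact (hball hz).le
    exact mem_closedBall.mp <| closure_minimal (convexHull_min himage (convex_closedBall _ _))
      isClosed_closedBall hy_mem

theorem stmt_0_general {n : ℕ} (f : (Fin n → ℝ) → (Fin n → ℝ))
    (r₀ : Fin n → ℝ) (hcont : ContinuousAt f r₀) :
    (⋂ δ ∈ Set.Ioi (0:ℝ), ⋂ N ∈ {N : Set (Fin n → ℝ) | volume N = 0},
      closure (convexHull ℝ (f '' (Metric.ball r₀ δ \ N)))) = {f r₀} :=
  filippovRegularization_eq_singleton_of_continuousAt volume hcont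

theorem stmt_0 {n : ℕ} (f : (Fin n → ℝ) → (Fin n → ℝ))
    (hf : Measurable f)
    (hloc : ∀ r : Fin n → ℝ, ∃ δ > 0, ∃ M : ℝ, ∀ x ∈ Metric.ball r δ, ‖f x‖ ≤ M)
    (r₀ : Fin n → ℝ) (hcont : ContinuousAt f r₀) :
    (⋂ δ ∈ Set.Ioi (0:ℝ), ⋂ N ∈ {N : Set (Fin n → ℝ) | volume N = 0},
      closure (convexHull ℝ (f '' (Metric.ball r₀ δ \ N)))) = {f r₀} :=
  stmt_0_general f r₀ hcont
end

section
/- Let g : ℝ → ℝ be C² with g'' · sgn(g) ≥ 0 on ℝ (g'' ≥ 0 where g > 0 and g'' ≤ 0 where g < 0). Then the zero set {r ∈ ℝ : g(r) = 0}, if nonempty and if g changes sign (takes both positive and negative values), is a closed interval [α₁, α₂]; moreover g is convex on each connected component of {g > 0} and concave on each connected component of {g < 0}. -/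
/-!
Where `g > 0` we have `g'' ≥ 0`, so `g` is convex on every interval on which it is positive.
If `g(a) = g(b) = 0` and `g(x) > 0` for some `a < x < b`, the maximal interval `(u, v) ∋ x` on
which `g > 0` has `g(u) = g(v) = 0`, and convexity on `[u, v]` forces `g(x) ≤ 0`. Together with
the symmetric argument for `g < 0`, the zero set is order-connected. If `g(p) > 0 > g(q)`, it
meets `[[p, q]]` but contains neither endpoint, so it lies inside `[[p, q]]`; being closed, it is
a compact interval.
-/

open Set

section SecondDerivative

variable {g : ℝ → ℝ} {s : Set ℝ}

lemma ContDiff.differentiable_deriv_of_two (hg : ContDiff ℝ 2 g) :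
    Differentiable ℝ (deriv g) :=
  ((contDiff_succ_iff_deriv (n := 1)).mp hg).2.2.differentiable one_ne_zero

lemma ContDiff.convexOn_of_deriv_deriv_nonneg (hg : ContDiff ℝ 2 g) (hs : Convex ℝ s)
    (h : ∀ x ∈ interior s, 0 ≤ deriv (deriv g) x) : ConvexOn ℝ s g :=
  convexOn_of_deriv2_nonneg hs hg.continuous.continuousOn
    (hg.differentiable (by norm_num)).differentiableOn
    hg.differentiable_deriv_of_two.differentiableOn h

lemma ContDiff.concaveOn_of_deriv_deriv_nonpos (hg : ContDiff ℝ 2 g) (hs : Convex ℝ s)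
    (h : ∀ x ∈ interior s, deriv (deriv g) x ≤ 0) : ConcaveOn ℝ s g :=
  concaveOn_of_deriv2_nonpos hs hg.continuous.continuousOn
    (hg.differentiable (by norm_num)).differentiableOn
    hg.differentiable_deriv_of_two.differentiableOn h

end SecondDerivative

section ZeroSet

lemma IsClosed.exists_Ioo_subset_compl {Z : Set ℝ} (hZ : IsClosed Z) {a b x : ℝ} (ha : a ∈ Z)
    (hb : b ∈ Z) (hx : x ∈ Icc a b) (hxZ : x ∉ Z) :
    ∃ u ∈ Z, ∃ v ∈ Z, x ∈ Ioo u v ∧ Ioo u v ⊆ Zᶜ := by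
  have hLbdd : BddAbove (Z ∩ Icc a x) := bddAbove_Icc.mono inter_subset_right
  have hRbdd : BddBelow (Z ∩ Icc x b) := bddBelow_Icc.mono inter_subset_right
  have hL : sSup (Z ∩ Icc a x) ∈ Z ∩ Icc a x :=
    (hZ.inter isClosed_Icc).csSup_mem ⟨a, ha, left_mem_Icc.2 hx.1⟩ hLbdd
  have hR : sInf (Z ∩ Icc x b) ∈ Z ∩ Icc x b :=
    (hZ.inter isClosed_Icc).csInf_mem ⟨b, hb, right_mem_Icc.2 hx.2⟩ hRbdd
  have hLx : sSup (Z ∩ Icc a x) < x := hL.2.2.lt_of_ne fun h => hxZ (h ▸ hL.1)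
  have hxR : x < sInf (Z ∩ Icc x b) := hR.2.1.lt_of_ne fun h => hxZ (h ▸ hR.1)
  refine ⟨_, hL.1, _, hR.1, ⟨hLx, hxR⟩, fun t ht htZ => ?_⟩
  rcases le_total t x with htx | hxt
  · exact (le_csSup hLbdd ⟨htZ, hL.2.1.trans ht.1.le, htx⟩).not_gt ht.1
  · exact (csInf_le hRbdd ⟨htZ, hxt, ht.2.le.trans hR.2.2⟩).not_gt ht.2

variable {g : ℝ → ℝ}

lemma nonpos_of_mem_Icc_of_eq_zero (hg : Continuous g)
    (hconv : ∀ u v, (∀ t ∈ Ioo u v, 0 < g t) → ConvexOn ℝ (Icc u v) g)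
    {a b x : ℝ} (ha : g a = 0) (hb : g b = 0) (hx : x ∈ Icc a b) : g x ≤ 0 := by
  by_contra! hpos
  obtain ⟨u, hu, v, hv, hxuv, hsub⟩ :=
    (isClosed_eq hg continuous_const).exists_Ioo_subset_compl ha hb hx hpos.ne'
  have hpos_Ioo : ∀ t ∈ Ioo u v, 0 < g t := by
    intro t ht
    by_contra! hle
    obtain ⟨c, hc, hgc⟩ :=
      isPreconnected_Ioo.intermediate_value ht hxuv hg.continuousOn ⟨hle, hpos.le⟩
    exact hsub hc hgc
  have huv : u ≤ v := (hxuv.1.trans hxuv.2).le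
  have hle := (hconv u v hpos_Ioo).le_on_segment (left_mem_Icc.2 huv) (right_mem_Icc.2 huv)
    (by rw [segment_eq_Icc huv]; exact Ioo_subset_Icc_self hxuv)
  rw [show g u = 0 from hu, show g v = 0 from hv, max_self] at hle
  exact hle.not_gt hpos

lemma ordConnected_setOf_eq_zero (hg : Continuous g)
    (hconv : ∀ u v, (∀ t ∈ Ioo u v, 0 < g t) → ConvexOn ℝ (Icc u v) g)
    (hconc : ∀ u v, (∀ t ∈ Ioo u v, g t < 0) → ConcaveOn ℝ (Icc u v) g) :
    OrdConnected {r | g r = 0} := by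
  refine ⟨fun a ha b hb x hx => le_antisymm (nonpos_of_mem_Icc_of_eq_zero hg hconv ha hb hx) ?_⟩
  have hconv_neg : ∀ u v, (∀ t ∈ Ioo u v, 0 < (-g) t) → ConvexOn ℝ (Icc u v) (-g) :=
    fun u v h => (hconc u v fun t ht => neg_pos.1 (h t ht)).neg
  simpa using nonpos_of_mem_Icc_of_eq_zero hg.neg hconv_neg (neg_eq_zero.2 ha) (neg_eq_zero.2 hb) hx

end ZeroSet

lemma Set.OrdConnected.subset_uIcc {α : Type*} [LinearOrder α] {s : Set α} (hs : s.OrdConnected)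
    {p q z : α} (hz : z ∈ s ∩ uIcc p q) (hp : p ∉ s) (hq : q ∉ s) : s ⊆ uIcc p q := by
  intro r hr
  refine ⟨le_of_not_gt fun h => ?_, le_of_not_gt fun h => ?_⟩
  · have hmin : p ⊓ q ∈ s := hs.out hr hz.1 ⟨h.le, hz.2.1⟩
    rcases min_choice p q with e | e <;> rw [e] at hmin
    exacts [hp hmin, hq hmin]
  · have hmax : p ⊔ q ∈ s := hs.out hz.1 hr ⟨hz.2.2, h.le⟩
    rcases max_choice p q with e | e <;> rw [e] at hmax
    exacts [hp hmax, hq hmax]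

lemma Set.OrdConnected.exists_eq_Icc_of_isCompact {α : Type*} [ConditionallyCompleteLinearOrder α]
    [DenselyOrdered α] [TopologicalSpace α] [OrderTopology α] {s : Set α} (hs : s.OrdConnected) (hc : IsCompact s)
    (hne : s.Nonempty) : ∃ a b, a ≤ b ∧ s = Icc a b := by
  have heq := eq_Icc_of_connected_compact ⟨hne, hs.isPreconnected⟩ hc
  exact ⟨sInf s, sSup s, nonempty_Icc.1 (heq ▸ hne), heq⟩

theorem stmt_8 (g : ℝ → ℝ) (hg : ContDiff ℝ 2 g)
    (hsgn : ∀ r : ℝ, (0 < g r → 0 ≤ deriv (deriv g) r) ∧ (g r < 0 → deriv (deriv g) r ≤ 0)) :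
    ((∃ r, g r = 0) → (∃ p, 0 < g p) → (∃ q, g q < 0) →
      ∃ α₁ α₂ : ℝ, α₁ ≤ α₂ ∧ {r : ℝ | g r = 0} = Set.Icc α₁ α₂) ∧
    (∀ s : Set ℝ, Convex ℝ s → (∀ x ∈ s, 0 < g x) → ConvexOn ℝ s g) ∧
    (∀ s : Set ℝ, Convex ℝ s → (∀ x ∈ s, g x < 0) → ConcaveOn ℝ s g) := by
  have hconv (s : Set ℝ) (hs : Convex ℝ s) (h : ∀ x ∈ interior s, 0 < g x) : ConvexOn ℝ s g :=
    hg.convexOn_of_deriv_deriv_nonneg hs fun x hx => (hsgn x).1 (h x hx)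
  have hconc (s : Set ℝ) (hs : Convex ℝ s) (h : ∀ x ∈ interior s, g x < 0) : ConcaveOn ℝ s g :=
    hg.concaveOn_of_deriv_deriv_nonpos hs fun x hx => (hsgn x).2 (h x hx)
  refine ⟨?_, fun s hs h => hconv s hs fun x hx => h x (interior_subset hx),
    fun s hs h => hconc s hs fun x hx => h x (interior_subset hx)⟩
  rintro ⟨r, hr⟩ ⟨p, hp⟩ ⟨q, hq⟩
  have hZ : OrdConnected {r | g r = 0} := ordConnected_setOf_eq_zero hg.continuous
    (fun u v h => hconv _ (convex_Icc u v) (by rwa [interior_Icc]))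
    (fun u v h => hconc _ (convex_Icc u v) (by rwa [interior_Icc]))
  obtain ⟨z, hz, hgz⟩ : ∃ z ∈ uIcc p q, g z = 0 := isPreconnected_uIcc.intermediate_value
    right_mem_uIcc left_mem_uIcc hg.continuous.continuousOn ⟨hq.le, hp.le⟩
  have hsub : {r | g r = 0} ⊆ uIcc p q := hZ.subset_uIcc ⟨hgz, hz⟩ hp.ne' hq.ne
  exact hZ.exists_eq_Icc_of_isCompact
    (isCompact_uIcc.of_isClosed_subset (isClosed_eq hg.continuous continuous_const) hsub) ⟨r, hr⟩
end

section
/- Let f : ℝⁿ → ℝⁿ with f(r) = f₁(r) for g(r) > 0 and f(r) = f₂(r) for g(r) < 0, where f₁, f₂ are continuous and g is continuous. Then the Filippov regularization of f satisfies F(y) ⊆ f₁(y)·H̃(g(y)) + f₂(y)·H̃(−g(y)) for all y ∈ ℝⁿ, where H̃ is the multivalued Heaviside function; in particular if g(y) ≠ 0 then F(y) = {f₁(y)} or {f₂(y)} according to the sign of g(y). -/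
open MeasureTheory

private lemma ball_diff_nonempty {n : ℕ} (y : Fin n → ℝ) {δ : ℝ} (hδ : 0 < δ)
    {N : Set (Fin n → ℝ)} (hN : volume N = 0) : (Metric.ball y δ \ N).Nonempty := by
  apply nonempty_of_measure_ne_zero (μ := volume)
  rw [measure_diff_null hN]
  exact (Metric.measure_ball_pos volume y hδ).ne'

/-- If `f` agrees with a continuous `h` on an open neighborhood of `y`, the Filippov set is
`{h y}`. -/
private lemma filippov_const {n : ℕ} (f h : (Fin n → ℝ) → (Fin n → ℝ)) (hh : Continuous h)
    {U : Set (Fin n → ℝ)} (hU : IsOpen U) {y : Fin n → ℝ} (hy : y ∈ U)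
    (heq : ∀ z ∈ U, f z = h z) :
    (⋂ δ ∈ Set.Ioi (0:ℝ), ⋂ N ∈ {N : Set (Fin n → ℝ) | volume N = 0},
      closure (convexHull ℝ (f '' (Metric.ball y δ \ N)))) = {h y} := by
  obtain ⟨δ₀, hδ₀, hball₀⟩ := Metric.isOpen_iff.1 hU y hy
  apply Set.eq_singleton_iff_unique_mem.2
  constructor
  · -- h y belongs to every closure of convex hull
    simp only [Set.mem_iInter, Set.mem_Ioi, Set.mem_setOf_eq]
    intro δ hδ N hN
    refine Metric.mem_closure_iff.2 fun ε hε => ?_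
    obtain ⟨δ₁, hδ₁, hδ₁'⟩ := Metric.continuousAt_iff.1 hh.continuousAt ε hε
    obtain ⟨z, hz⟩ := ball_diff_nonempty y (lt_min (lt_min hδ hδ₀) hδ₁) hN
    have hzδ : z ∈ Metric.ball y δ \ N :=
      ⟨Metric.ball_subset_ball ((min_le_left _ _).trans (min_le_left _ _)) hz.1, hz.2⟩
    refine ⟨f z, subset_convexHull ℝ _ (Set.mem_image_of_mem f hzδ), ?_⟩
    have hzU : z ∈ U := hball₀ (Metric.ball_subset_ball ((min_le_left _ _).trans
      (min_le_right _ _)) hz.1)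
    rw [heq z hzU, dist_comm]
    exact hδ₁' (Metric.ball_subset_ball (min_le_right _ _) hz.1)
  · -- uniqueness
    intro x hx
    simp only [Set.mem_iInter, Set.mem_Ioi, Set.mem_setOf_eq] at hx
    refine eq_of_forall_dist_le fun ε hε => ?_
    obtain ⟨δ₁, hδ₁, hδ₁'⟩ := Metric.continuousAt_iff.1 hh.continuousAt ε hε
    have hx' := hx (min δ₀ δ₁) (lt_min hδ₀ hδ₁) ∅ (by simp)
    have himg : f '' (Metric.ball y (min δ₀ δ₁) \ ∅) ⊆ Metric.closedBall (h y) ε := by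
      rintro _ ⟨z, hz, rfl⟩
      rw [Set.diff_empty] at hz
      rw [Metric.mem_closedBall, heq z (hball₀ (Metric.ball_subset_ball (min_le_left _ _) hz))]
      exact le_of_lt (hδ₁' (Metric.ball_subset_ball (min_le_right _ _) hz))
    have := closure_minimal (convexHull_min himg (convex_closedBall _ _))
      Metric.isClosed_closedBall hx'
    exact Metric.mem_closedBall.1 this

theorem stmt_11 {n : ℕ} (f f₁ f₂ : (Fin n → ℝ) → (Fin n → ℝ)) (g : (Fin n → ℝ) → ℝ)
    (hf : Measurable f) (hf₁ : Continuous f₁) (hf₂ : Continuous f₂) (hg : Continuous g)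
    (hloc : ∀ r : Fin n → ℝ, ∃ δ > 0, ∃ M : ℝ, ∀ z ∈ Metric.ball r δ, ‖f z‖ ≤ M)
    (heq₁ : ∀ r, 0 < g r → f r = f₁ r) (heq₂ : ∀ r, g r < 0 → f r = f₂ r)
    (hnull : volume {r : Fin n → ℝ | g r = 0} = 0)
    (F : (Fin n → ℝ) → Set (Fin n → ℝ))
    (hF : ∀ z, F z = ⋂ δ ∈ Set.Ioi (0:ℝ), ⋂ N ∈ {N : Set (Fin n → ℝ) | volume N = 0},
      closure (convexHull ℝ (f '' (Metric.ball z δ \ N))))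
    (Htilde : ℝ → Set ℝ)
    (hH : ∀ r : ℝ, Htilde r = if 0 < r then {1} else if r < 0 then {0} else Set.Icc 0 1)
    (y : Fin n → ℝ) :
    F y ⊆ {z | ∃ a ∈ Htilde (g y), ∃ b ∈ Htilde (-(g y)), z = a • f₁ y + b • f₂ y} ∧
    (0 < g y → F y = {f₁ y}) ∧ (g y < 0 → F y = {f₂ y}) := by
  have hpos : 0 < g y → F y = {f₁ y} := fun hgy => by
    rw [hF y]
    exact filippov_const f f₁ hf₁ (isOpen_Ioi.preimage hg) (Set.mem_preimage.2 hgy)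
      (fun z hz => heq₁ z hz)
  have hneg : g y < 0 → F y = {f₂ y} := fun hgy => by
    rw [hF y]
    exact filippov_const f f₂ hf₂ (isOpen_Iio.preimage hg) (Set.mem_preimage.2 hgy)
      (fun z hz => heq₂ z hz)
  refine ⟨?_, hpos, hneg⟩
  rcases lt_trichotomy (g y) 0 with hgy | hgy | hgy
  · rw [hneg hgy]
    rintro x rfl
    refine ⟨0, ?_, 1, ?_, by simp⟩
    · rw [hH]; simp [hgy, not_lt.2 hgy.le]
    · rw [hH]; simp [neg_pos.2 hgy]
  · -- g y = 0 : Filippov set is contained in the segment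
    intro x hx
    rw [hF y] at hx
    simp only [Set.mem_iInter, Set.mem_Ioi, Set.mem_setOf_eq] at hx
    set S := segment ℝ (f₁ y) (f₂ y) with hS
    have hSclosed : IsClosed S := by
      rw [hS, segment_eq_image']
      exact ((isCompact_Icc.image (by continuity))).isClosed
    have hxS : x ∈ S := by
      rw [← hSclosed.closure_eq, Metric.closure_eq_iInter_cthickening]
      simp only [Set.mem_iInter]
      intro ε hε
      obtain ⟨δ₁, hδ₁, hδ₁'⟩ := Metric.continuousAt_iff.1 hf₁.continuousAt ε hε
      obtain ⟨δ₂, hδ₂, hδ₂'⟩ := Metric.continuousAt_iff.1 hf₂.continuousAt ε hε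
      have hx' := hx (min δ₁ δ₂) (lt_min hδ₁ hδ₂) _ hnull
      have himg : f '' (Metric.ball y (min δ₁ δ₂) \ {r | g r = 0}) ⊆
          Metric.cthickening ε S := by
        rintro _ ⟨z, ⟨hzb, hzN⟩, rfl⟩
        have hgz : g z ≠ 0 := hzN
        rcases hgz.lt_or_gt with h | h
        · refine Metric.mem_cthickening_of_dist_le _ _ _ _ (right_mem_segment ℝ _ _) ?_
          rw [heq₂ z h]
          exact le_of_lt (hδ₂' (Metric.ball_subset_ball (min_le_right _ _) hzb))
        · refine Metric.mem_cthickening_of_dist_le _ _ _ _ (left_mem_segment ℝ _ _) ?_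
          rw [heq₁ z h]
          exact le_of_lt (hδ₁' (Metric.ball_subset_ball (min_le_left _ _) hzb))
      exact closure_minimal (convexHull_min himg ((convex_segment _ _).cthickening ε))
        Metric.isClosed_cthickening hx'
    obtain ⟨a, b, ha, hb, hab, hx⟩ := hxS
    have hIcc : Htilde 0 = Set.Icc (0:ℝ) 1 := by rw [hH]; simp
    refine ⟨a, ?_, b, ?_, hx.symm⟩
    · rw [hgy, hIcc]; exact ⟨ha, by linarith⟩
    · rw [hgy, neg_zero, hIcc]; exact ⟨hb, by linarith⟩
  · rw [hpos hgy]
    rintro x rfl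
    refine ⟨1, ?_, 0, ?_, by simp⟩
    · rw [hH]; simp [hgy]
    · rw [hH]; simp [not_lt.2 hgy.le, neg_neg_iff_pos.2 hgy, neg_lt_zero.2 hgy]
end

section
/- Consider the deterministic analogue of the reaching estimate: let z : [0,∞) → [0,∞) be absolutely continuous with z(0) = z₀ and z'(t) ≤ −α·1_{[z(t)>0]} + C̃ z(t) for a.e. t, where α, C̃ > 0. Then for every t > 0 with (C̃/α)(1−e^{−C̃t})^{−1} z₀ < 1, there exists s ∈ (0,t] with z(s) = 0. -/
/-!
Once `z` is positive on `(0, t]`, the indicator equals one there and `z' ≤ -α + C z` holds in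
integral form, so Grönwall's inequality bounds `z` by the solution of `B' = -α + C B`,
`B 0 = z₀`. The hypothesis on `t` says exactly that `B t < 0`, contradicting `z t ≥ 0`.
-/

open Set Filter Topology Real

theorem eventually_slope_lt_of_sub_le_integral {f g : ℝ → ℝ} {x r : ℝ} (hg : Continuous g)
    (hfg : ∀ᶠ y in 𝓝[>] x, f y - f x ≤ ∫ u in x..y, g u) (hr : g x < r) :
    ∀ᶠ y in 𝓝[>] x, slope f x y < r := by
  have hderiv := ((hg.integral_hasStrictDerivAt x x).hasDerivAt.hasDerivWithinAt
    (s := Ioi x)).limsup_slope_le' (lt_irrefl x) hr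
  filter_upwards [hderiv, hfg, self_mem_nhdsWithin] with y hslope hy (hxy : x < y)
  refine lt_of_le_of_lt ?_ hslope
  rw [slope_def_field, slope_def_field, intervalIntegral.integral_same, sub_zero]
  gcongr

theorem le_gronwallBound_of_sub_le_integral {f : ℝ → ℝ} {δ K ε a b : ℝ} (hf : Continuous f)
    (hint : ∀ x ∈ Ico a b, ∀ y ∈ Ioc x b, f y - f x ≤ ∫ u in x..y, (K * f u + ε))
    (ha : f a ≤ δ) : ∀ x ∈ Icc a b, f x ≤ gronwallBound δ K ε (x - a) := by
  refine le_gronwallBound_of_liminf_deriv_right_le hf.continuousOn (fun x hx r hr => ?_) ha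
    (fun x _ => le_rfl)
  have hnear : ∀ᶠ y in 𝓝[>] x, f y - f x ≤ ∫ u in x..y, (K * f u + ε) :=
    eventually_of_mem (Ioc_mem_nhdsGT hx.2) (hint x hx)
  exact (eventually_slope_lt_of_sub_le_integral (by fun_prop) hnear hr).frequently

theorem gronwallBound_neg_of_lt_one {z₀ α C t : ℝ} (hα : 0 < α) (hC : 0 < C) (ht : 0 < t)
    (hlt : C / α * (1 - exp (-C * t))⁻¹ * z₀ < 1) : gronwallBound z₀ C (-α) t < 0 := by
  have hexp : exp (-C * t) < 1 := exp_lt_one_iff.2 (by nlinarith)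
  have hCz : C * z₀ < α * (1 - exp (-C * t)) := by
    rw [show C / α * (1 - exp (-C * t))⁻¹ * z₀ = C * z₀ / (α * (1 - exp (-C * t))) by
      field_simp] at hlt
    exact (div_lt_one (mul_pos hα (sub_pos.2 hexp))).1 hlt
  have hprod : exp (C * t) * exp (-C * t) = 1 := by rw [← exp_add]; ring_nf; exact exp_zero
  rw [gronwallBound_of_K_ne_0 hC.ne']
  have hscaled : C * (z₀ * exp (C * t) + -α / C * (exp (C * t) - 1))
      = exp (C * t) * (C * z₀ - α * (1 - exp (-C * t))) := by
    have hCα : C * (-α / C) = -α := by field_simp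
    linear_combination (exp (C * t) - 1) * hCα - α * hprod
  refine neg_of_mul_neg_right ?_ hC.le
  rw [hscaled]
  exact mul_neg_of_pos_of_neg (exp_pos _) (by linarith)

theorem stmt_13 (z : ℝ → ℝ) (z₀ α C : ℝ) (hα : 0 < α) (hC : 0 < C)
    (hcont : Continuous z) (hnn : ∀ t, 0 ≤ z t) (hz0 : z 0 = z₀)
    (hineq : ∀ s t : ℝ, 0 ≤ s → s ≤ t →
      z t - z s ≤ ∫ u in s..t, (-α * (if 0 < z u then 1 else 0) + C * z u)) :
    ∀ t > (0:ℝ), C / α * (1 - Real.exp (-C * t))⁻¹ * z₀ < 1 →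
      ∃ s, 0 < s ∧ s ≤ t ∧ z s = 0 := by
  intro t ht hlt
  by_contra! hcon
  have hpos : ∀ u ∈ Ioc 0 t, 0 < z u := fun u hu => (hnn u).lt_of_ne' (hcon u hu.1 hu.2)
  have hint : ∀ x ∈ Ico 0 t, ∀ y ∈ Ioc x t, z y - z x ≤ ∫ u in x..y, (C * z u + -α) := by
    intro x hx y hy
    refine (hineq x y hx.1 hy.1.le).trans_eq
      (intervalIntegral.integral_congr_ae (.of_forall fun u hu => ?_))
    rw [uIoc_of_le hy.1.le] at hu
    have : 0 < z u := hpos u ⟨hx.1.trans_lt hu.1, hu.2.trans hy.2⟩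
    rw [if_pos this]
    ring
  have hbound := le_gronwallBound_of_sub_le_integral hcont hint hz0.le t ⟨ht.le, le_rfl⟩
  rw [sub_zero] at hbound
  linarith [hnn t, gronwallBound_neg_of_lt_one hα hC ht hlt]
end

section
/- Let (η_n) be a sequence in L²(Ω; ℝⁿ) (for a finite measure space Ω) converging weakly to η, and suppose there is a set-valued map F with closed convex values such that, for a.e. ω, every subsequential limit of (η_n(ω)) lies in F(X(ω)) and (η_n(ω)) is bounded. Then η(ω) ∈ F(X(ω)) for a.e. ω. -/
open MeasureTheory Filter Metric Set Topology

/-!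
Mazur: separating by Hahn–Banach, the weak limit `ηlim` lies in the norm closure of the convex
hull of every tail `(η k)_{k ≥ m}` in `L²`. The `L²` functions taking values a.e. in a closed
convex set form a closed convex set, so a.e. `ηlim ω` lies in the closed convex hull of every
tail `(η k ω)_{k ≥ m}`. Pointwise, a bounded sequence whose cluster points lie in `F (X ω)`
eventually enters each (convex) `ε`-thickening of it, so these hulls shrink into `F (X ω)`.
-/

theorem mem_closure_convexHull_tail_of_forall_tendsto {E : Type*} [AddCommGroup E] [Module ℝ E]
    [TopologicalSpace E] [IsTopologicalAddGroup E] [ContinuousSMul ℝ E] [LocallyConvexSpace ℝ E]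
    {f : ℕ → E} {x : E} (hf : ∀ φ : StrongDual ℝ E, Tendsto (fun k => φ (f k)) atTop (𝓝 (φ x)))
    (m : ℕ) : x ∈ closure (convexHull ℝ (f '' Ici m)) := by
  by_contra hx
  obtain ⟨φ, u, hφx, hφu⟩ :=
    geometric_hahn_banach_point_closed (convex_convexHull ℝ _).closure isClosed_closure hx
  have hu : ∀ᶠ k in atTop, u ≤ φ (f k) := (eventually_ge_atTop m).mono fun k hk =>
    (hφu _ (subset_closure (subset_convexHull ℝ _ ⟨k, hk, rfl⟩))).le
  exact hφx.not_ge (ge_of_tendsto (hf φ) hu)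

theorem tendsto_dual_of_forall_tendsto_inner {H : Type*} [NormedAddCommGroup H]
    [InnerProductSpace ℝ H] [CompleteSpace H] {ι : Type*} {l : Filter ι} {f : ι → H} {x : H}
    (hf : ∀ g, Tendsto (fun k => inner ℝ (f k) g) l (𝓝 (inner ℝ x g))) (φ : StrongDual ℝ H) :
    Tendsto (fun k => φ (f k)) l (𝓝 (φ x)) := by
  have hφ : ∀ y, φ y = inner ℝ y ((InnerProductSpace.toDual ℝ H).symm φ) := fun y => by
    rw [real_inner_comm, InnerProductSpace.toDual_symm_apply]
  simp only [hφ]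
  exact hf _

namespace MeasureTheory

theorem L2.inner_toLp_eq_integral {α E : Type*} [MeasurableSpace α] {μ : Measure α}
    [NormedAddCommGroup E] [InnerProductSpace ℝ E] {h : α → E} (hh : MemLp h 2 μ)
    (g : Lp E 2 μ) : inner ℝ (hh.toLp h) g = ∫ a, inner ℝ (h a) (g a) ∂μ := by
  rw [L2.inner_def]
  refine integral_congr_ae ?_
  filter_upwards [hh.coeFn_toLp] with a ha
  rw [ha]

namespace Lp

variable {α E : Type*} [MeasurableSpace α] {μ : Measure α} [NormedAddCommGroup E] {p : ENNReal}

theorem convex_setOf_ae_mem [NormedSpace ℝ E] {C : α → Set E} (hC : ∀ a, Convex ℝ (C a)) :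
    Convex ℝ {f : Lp E p μ | ∀ᵐ a ∂μ, f a ∈ C a} := by
  intro f hf g hg s t hs ht hst
  filter_upwards [hf, hg, Lp.coeFn_add (s • f) (t • g), Lp.coeFn_smul s f, Lp.coeFn_smul t g]
    with a hfa hga hadd hsf htg
  rw [hadd, Pi.add_apply, hsf, htg]
  exact hC a hfa hga hs ht hst

theorem isClosed_setOf_ae_mem [Fact (1 ≤ p)] {C : α → Set E} (hC : ∀ a, IsClosed (C a)) :
    IsClosed {f : Lp E p μ | ∀ᵐ a ∂μ, f a ∈ C a} := by
  refine isSeqClosed_iff_isClosed.1 fun _ _ hf hfg => ?_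
  obtain ⟨ns, -, hae⟩ := (tendstoInMeasure_of_tendsto_Lp hfg).exists_seq_tendsto_ae
  filter_upwards [ae_all_iff.2 hf, hae] with a hfa hlim
  exact (hC a).mem_of_tendsto hlim (Eventually.of_forall fun j => hfa (ns j))

theorem ae_mem_closure_convexHull_of_mem_closure_convexHull [Fact (1 ≤ p)] [NormedSpace ℝ E]
    {ι : Type*} {f : ι → α → E} (hf : ∀ i, MemLp (f i) p μ) {s : Set ι} {g : Lp E p μ}
    (hg : g ∈ closure (convexHull ℝ ((fun i => (hf i).toLp (f i)) '' s))) :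
    ∀ᵐ a ∂μ, g a ∈ closure (convexHull ℝ ((fun i => f i a) '' s)) := by
  refine closure_minimal (convexHull_min ?_ (convex_setOf_ae_mem fun a =>
    (convex_convexHull ℝ _).closure)) (isClosed_setOf_ae_mem fun a => isClosed_closure) hg
  rintro _ ⟨i, hi, rfl⟩
  filter_upwards [(hf i).coeFn_toLp] with a ha
  rw [ha]
  exact subset_closure (subset_convexHull ℝ _ (mem_image_of_mem _ hi))

end Lp

end MeasureTheory

theorem eventually_mem_thickening_of_mapClusterPt_mem {X : Type*} [PseudoMetricSpace X]
    [ProperSpace X] {u : ℕ → X} {K : Set X} (hu : Bornology.IsBounded (range u))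
    (hK : ∀ y, MapClusterPt y atTop u → y ∈ K) {ε : ℝ} (hε : 0 < ε) :
    ∀ᶠ k in atTop, u k ∈ thickening ε K := by
  by_contra hev
  have : (atTop ⊓ 𝓟 {k | u k ∉ thickening ε K}).NeBot :=
    frequently_iff_neBot.1 (not_eventually.1 hev)
  obtain ⟨y, -, hy⟩ := hu.isCompact_closure.exists_mapClusterPt
    (f := atTop ⊓ 𝓟 {k | u k ∉ thickening ε K})
    (tendsto_principal.2 (Eventually.of_forall fun k => subset_closure (mem_range_self k)))
  have hyK : y ∈ K := hK y (hy.mono inf_le_left)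
  obtain ⟨k, hin, hout⟩ := ((hy.frequently (isOpen_thickening.mem_nhds
    (self_subset_thickening hε K hyK))).and_eventually (eventually_inf_principal.2
      (Eventually.of_forall fun _ hk => hk))).exists
  exact hout hin

theorem mem_of_forall_mem_closure_convexHull_tail {E : Type*} [NormedAddCommGroup E]
    [NormedSpace ℝ E] [ProperSpace E] {u : ℕ → E} {K : Set E} (hKc : Convex ℝ K)
    (hKcl : IsClosed K) (hu : Bornology.IsBounded (range u))
    (hK : ∀ y, MapClusterPt y atTop u → y ∈ K) {y : E}
    (hy : ∀ m, y ∈ closure (convexHull ℝ (u '' Ici m))) : y ∈ K := by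
  rw [← hKcl.closure_eq, closure_eq_iInter_cthickening]
  simp only [mem_iInter]
  intro ε hε
  obtain ⟨m, hm⟩ :=
    (eventually_mem_thickening_of_mapClusterPt_mem hu hK hε).exists_forall_of_atTop
  refine closure_minimal (convexHull_min ?_ (hKc.cthickening ε)) isClosed_cthickening (hy m)
  rintro _ ⟨k, hk, rfl⟩
  exact thickening_subset_cthickening ε K (hm k hk)

theorem stmt_17_general {n : ℕ} {Ω : Type*} [MeasurableSpace Ω] (μ : Measure Ω)
    (η : ℕ → Ω → EuclideanSpace ℝ (Fin n)) (ηlim : Ω → EuclideanSpace ℝ (Fin n))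
    (hmem : ∀ k, MemLp (η k) 2 μ) (hmemlim : MemLp ηlim 2 μ)
    (hweak : ∀ g : Ω → EuclideanSpace ℝ (Fin n), MemLp g 2 μ →
      Filter.Tendsto (fun k => ∫ ω, (inner ℝ (η k ω) (g ω) : ℝ) ∂μ) Filter.atTop
        (nhds (∫ ω, (inner ℝ (ηlim ω) (g ω) : ℝ) ∂μ)))
    (F : EuclideanSpace ℝ (Fin n) → Set (EuclideanSpace ℝ (Fin n)))
    (hF : ∀ x, Convex ℝ (F x) ∧ IsClosed (F x) ∧ (F x).Nonempty)
    (X : Ω → EuclideanSpace ℝ (Fin n))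
    (hbdd : ∀ᵐ ω ∂μ, ∃ M : ℝ, ∀ k, ‖η k ω‖ ≤ M)
    (hclus : ∀ᵐ ω ∂μ, ∀ y, MapClusterPt y Filter.atTop (fun k => η k ω) → y ∈ F (X ω)) :
    ∀ᵐ ω ∂μ, ηlim ω ∈ F (X ω) := by
  have hweakLp : ∀ φ : StrongDual ℝ (Lp (EuclideanSpace ℝ (Fin n)) 2 μ),
      Tendsto (fun k => φ ((hmem k).toLp (η k))) atTop (𝓝 (φ (hmemlim.toLp ηlim))) :=
    tendsto_dual_of_forall_tendsto_inner fun g => by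
      simpa only [L2.inner_toLp_eq_integral] using hweak g (Lp.memLp g)
  have hhull : ∀ m, ∀ᵐ ω ∂μ, ηlim ω ∈ closure (convexHull ℝ ((fun k => η k ω) '' Ici m)) := by
    intro m
    filter_upwards [Lp.ae_mem_closure_convexHull_of_mem_closure_convexHull hmem
      (mem_closure_convexHull_tail_of_forall_tendsto hweakLp m), hmemlim.coeFn_toLp]
      with ω hω hlim
    rwa [hlim] at hω
  filter_upwards [ae_all_iff.2 hhull, hbdd, hclus] with ω hω ⟨M, hM⟩ hcl
  exact mem_of_forall_mem_closure_convexHull_tail (hF _).1 (hF _).2.1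
    (isBounded_iff_forall_norm_le.2 ⟨M, forall_mem_range.2 hM⟩) hcl hω

theorem stmt_17 {n : ℕ} {Ω : Type*} [MeasurableSpace Ω] (μ : Measure Ω) [IsFiniteMeasure μ]
    (η : ℕ → Ω → EuclideanSpace ℝ (Fin n)) (ηlim : Ω → EuclideanSpace ℝ (Fin n))
    (hmem : ∀ k, MemLp (η k) 2 μ) (hmemlim : MemLp ηlim 2 μ)
    (hweak : ∀ g : Ω → EuclideanSpace ℝ (Fin n), MemLp g 2 μ →
      Filter.Tendsto (fun k => ∫ ω, (inner ℝ (η k ω) (g ω) : ℝ) ∂μ) Filter.atTop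
        (nhds (∫ ω, (inner ℝ (ηlim ω) (g ω) : ℝ) ∂μ)))
    (F : EuclideanSpace ℝ (Fin n) → Set (EuclideanSpace ℝ (Fin n)))
    (hF : ∀ x, Convex ℝ (F x) ∧ IsClosed (F x) ∧ (F x).Nonempty)
    (X : Ω → EuclideanSpace ℝ (Fin n)) (hX : Measurable X)
    (hbdd : ∀ᵐ ω ∂μ, ∃ M : ℝ, ∀ k, ‖η k ω‖ ≤ M)
    (hclus : ∀ᵐ ω ∂μ, ∀ y, MapClusterPt y Filter.atTop (fun k => η k ω) → y ∈ F (X ω)) :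
    ∀ᵐ ω ∂μ, ηlim ω ∈ F (X ω) :=
  stmt_17_general μ η ηlim hmem hmemlim hweak F hF X hbdd hclus
end
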